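/- Consider p̃' = (½ − α)r(t) − K p̃ and the barrier update law α' = γ α(1 − α)(p̃ᵀ r(t) − (α − ½)(k + |p̃ᵀ r(t)|)) with K symmetric positive definite, γ, k > 0, and r continuous and bounded. Then along any solution with α(t₀) ∈ (0,1), the function V = ½‖p̃‖² + (1/γ)V_b(α) satisfies dV/dt = −(k + |p̃ᵀ r(t)|)(α − ½)² − p̃ᵀ K p̃ ≤ 0, where V_b(α) = ½ log(1/(1 − 4(α − ½)²)). -/

import Mathlib

open Matrix
open scoped RealInnerProductSpace

/-!
Since `1 - 4 (a - ½)² = 4 a (1 - a)`, the barrier `V_b(a) = -½ log (4 a (1 - a))` has derivative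
`(a - ½) / (a (1 - a))` on `(0, 1)`. This cancels the factor `γ α (1 - α)` of the update law, so
`(1/γ) V_b'(α) α' = (α - ½) (p̃ᵀ r - (α - ½)(k + |p̃ᵀ r|))`, while `d/dt ½‖p̃‖² = (½ - α) p̃ᵀ r - p̃ᵀ K p̃`.
The cross terms `± (α - ½) p̃ᵀ r` cancel, and what is left is nonpositive because `K` is positive
definite.
-/

lemma EuclideanSpace.inner_equiv_symm {ι : Type*} [Fintype ι] (x : EuclideanSpace ℝ ι)
    (v : ι → ℝ) :
    ⟪x, (EuclideanSpace.equiv ι ℝ).symm v⟫ = EuclideanSpace.equiv ι ℝ x ⬝ᵥ v := by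
  simp [PiLp.inner_apply, dotProduct, EuclideanSpace.equiv, mul_comm]

lemma one_sub_four_mul_sub_half_sq (a : ℝ) : 1 - 4 * (a - 1/2) ^ 2 = 4 * (a * (1 - a)) := by
  ring

noncomputable def barrier (a : ℝ) : ℝ := (1/2) * Real.log (1 / (1 - 4 * (a - 1/2) ^ 2))

lemma hasDerivAt_barrier {a : ℝ} (ha : a ∈ Set.Ioo (0:ℝ) 1) :
    HasDerivAt barrier ((a - 1/2) / (a * (1 - a))) a := by
  obtain ⟨ha0, ha1⟩ := ha
  have hpos : 0 < a * (1 - a) := mul_pos ha0 (by linarith)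
  have hinner : HasDerivAt (fun x : ℝ => 1 - 4 * (x - 1/2) ^ 2) (-(8 * (a - 1/2))) a := by
    refine ((((hasDerivAt_id a).sub_const (1/2)).fun_pow 2).const_mul (4:ℝ)).const_sub 1
      |>.congr_deriv ?_
    simp only [id, Nat.cast_ofNat]
    ring
  have hlog := (hinner.log (by rw [one_sub_four_mul_sub_half_sq]; positivity)).const_mul (-(1/2 : ℝ))
  have heq : barrier = fun x => -(1/2) * Real.log (1 - 4 * (x - 1/2) ^ 2) := by
    funext x
    simp only [barrier, one_div, Real.log_inv]
    ring
  rw [heq]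
  refine hlog.congr_deriv ?_
  rw [one_sub_four_mul_sub_half_sq]
  field_simp
  ring

lemma barrier_deriv_mul_update {a : ℝ} (ha : a ∈ Set.Ioo (0:ℝ) 1) {γ : ℝ} (hγ : γ ≠ 0) (X : ℝ) :
    (1/γ) * ((a - 1/2) / (a * (1 - a)) * (γ * a * (1 - a) * X)) = (a - 1/2) * X := by
  have ha0 : a ≠ 0 := ha.1.ne'
  have ha1 : 1 - a ≠ 0 := (sub_pos.mpr ha.2).ne'
  field_simp

theorem barrier_coupled_system_lyapunov_derivative_general
    {n : ℕ} (K : Matrix (Fin n) (Fin n) ℝ) (hK : K.PosDef)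
    (γ k : ℝ) (hγ : 0 < γ) (hk : 0 < k)
    (r : ℝ → EuclideanSpace ℝ (Fin n))
    (p : ℝ → EuclideanSpace ℝ (Fin n)) (α : ℝ → ℝ)
    (hmem : ∀ t : ℝ, α t ∈ Set.Ioo (0:ℝ) 1)
    (hp : ∀ t : ℝ, HasDerivAt p
      ((1/2 - α t) • r t - (EuclideanSpace.equiv (Fin n) ℝ).symm (K.mulVec (p t))) t)
    (hα : ∀ t : ℝ, HasDerivAt α
      (γ * (α t) * (1 - α t) *
        (⟪p t, r t⟫ - (α t - 1/2) * (k + |⟪p t, r t⟫|))) t)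
    (Vb V : ℝ → ℝ)
    (hVb : ∀ a, Vb a = (1/2) * Real.log (1 / (1 - 4 * (a - 1/2)^2)))
    (hV : ∀ t, V t = (1/2) * ‖p t‖^2 + (1/γ) * Vb (α t)) :
    ∀ t : ℝ,
      HasDerivAt V (-((k + |⟪p t, r t⟫|) * (α t - 1/2)^2
          + (EuclideanSpace.equiv (Fin n) ℝ) (p t) ⬝ᵥ K.mulVec (p t))) t ∧
      -((k + |⟪p t, r t⟫|) * (α t - 1/2)^2
          + (EuclideanSpace.equiv (Fin n) ℝ) (p t) ⬝ᵥ K.mulVec (p t)) ≤ 0 := by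
  intro t
  obtain rfl : Vb = barrier := funext hVb
  have hnorm := (hp t).norm_sq.const_mul (1/2 : ℝ)
  have hbarrier := ((hasDerivAt_barrier (hmem t)).comp t (hα t)).const_mul (1/γ)
  refine ⟨(hnorm.add hbarrier).congr_of_eventuallyEq (.of_eq (funext hV)) |>.congr_deriv ?_, ?_⟩
  · rw [barrier_deriv_mul_update (hmem t) hγ.ne', inner_sub_right, real_inner_smul_right,
      EuclideanSpace.inner_equiv_symm]
    ring
  · have hquad : 0 ≤ EuclideanSpace.equiv (Fin n) ℝ (p t) ⬝ᵥ K.mulVec (p t) :=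
      hK.posSemidef.dotProduct_mulVec_nonneg (p t)
    have hbarrier_term : 0 ≤ (k + |⟪p t, r t⟫|) * (α t - 1/2) ^ 2 := by positivity
    linarith

/-- Lemma 2 (Lyapunov derivative): for p̃' = (½−α)r(t) − Kp̃ with the barrier
update law α' = γα(1−α)(p̃ᵀr − (α−½)(k + |p̃ᵀr|)), along a solution with
α(t) ∈ (0,1) the function V = ½‖p̃‖² + (1/γ)V_b(α), with
V_b(α) = ½log(1/(1−4(α−½)²)), satisfies
dV/dt = −(k + |p̃ᵀr|)(α−½)² − p̃ᵀKp̃ ≤ 0. -/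
theorem barrier_coupled_system_lyapunov_derivative
    {n : ℕ} (K : Matrix (Fin n) (Fin n) ℝ) (hK : K.PosDef)
    (γ k : ℝ) (hγ : 0 < γ) (hk : 0 < k)
    (r : ℝ → EuclideanSpace ℝ (Fin n)) (hrc : Continuous r)
    (hrb : ∃ M : ℝ, ∀ t, ‖r t‖ ≤ M)
    (p : ℝ → EuclideanSpace ℝ (Fin n)) (α : ℝ → ℝ)
    (hmem : ∀ t : ℝ, α t ∈ Set.Ioo (0:ℝ) 1)
    (hp : ∀ t : ℝ, HasDerivAt p
      ((1/2 - α t) • r t - (EuclideanSpace.equiv (Fin n) ℝ).symm (K.mulVec (p t))) t)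
    (hα : ∀ t : ℝ, HasDerivAt α
      (γ * (α t) * (1 - α t) *
        (⟪p t, r t⟫ - (α t - 1/2) * (k + |⟪p t, r t⟫|))) t)
    (Vb V : ℝ → ℝ)
    (hVb : ∀ a, Vb a = (1/2) * Real.log (1 / (1 - 4 * (a - 1/2)^2)))
    (hV : ∀ t, V t = (1/2) * ‖p t‖^2 + (1/γ) * Vb (α t)) :
    ∀ t : ℝ,
      HasDerivAt V (-((k + |⟪p t, r t⟫|) * (α t - 1/2)^2
          + (EuclideanSpace.equiv (Fin n) ℝ) (p t) ⬝ᵥ K.mulVec (p t))) t ∧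
      -((k + |⟪p t, r t⟫|) * (α t - 1/2)^2
          + (EuclideanSpace.equiv (Fin n) ℝ) (p t) ⬝ᵥ K.mulVec (p t)) ≤ 0 :=
  barrier_coupled_system_lyapunov_derivative_general K hK γ k hγ hk r p α hmem hp hα Vb V hVb hV
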